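/- Fix positive integers M, N, K, row supports ρ(k) ⊆ {1,…,M} and column supports γ(k) ⊆ {1,…,N}, positive weights λ₁,…,λ_K, ranks R₁,…,R_K, and a real M×N matrix X. For τ² > 0 let φ(x; τ²) = (2πτ²)^{-1/2} exp(−x²/(2τ²)) denote the centered Gaussian density. Define the joint density p(X, U, V) of the Bayesian model with unit-variance Gaussian errors and Gaussian priors with variance τₖ² = 1/λₖ on the free factor entries: p(X,U,V) = [∏_{m=1}^{M} ∏_{n=1}^{N} φ(X[m,n] − (∑ₖ U⁽ᵏ⁾V⁽ᵏ⁾ᵀ)[m,n]; 1)] · [∏ₖ ∏_{m ∈ ρ(k)} ∏_{r=1}^{Rₖ} φ(U⁽ᵏ⁾[m,r]; 1/λₖ)] · [∏ₖ ∏_{n ∈ γ(k)} ∏_{r=1}^{Rₖ} φ(V⁽ᵏ⁾[n,r]; 1/λₖ)], evaluated at factorizations (U,V) in which the m-th row of U⁽ᵏ⁾ is zero for m ∉ ρ(k) and the n-th row of V⁽ᵏ⁾ is zero for n ∉ γ(k). Then there is a constant C > 0, depending only on M, N, K, the supports, the ranks, and the weights (not on X, U, V), such that for all X and all such factorizations,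 p(X, U, V) = C · exp(−½[‖X − ∑ₖ U⁽ᵏ⁾V⁽ᵏ⁾ᵀ‖_F² + ∑ₖ λₖ(‖U⁽ᵏ⁾‖_F² + ‖V⁽ᵏ⁾‖_F²)]). Consequently, for fixed X, maximizing p over (U,V) is equivalent to minimizing the penalized factorization objective L(U,V) = ‖X − ∑ₖ U⁽ᵏ⁾V⁽ᵏ⁾ᵀ‖_F² + ∑ₖ λₖ(‖U⁽ᵏ⁾‖_F² + ‖V⁽ᵏ⁾‖_F²). (Proposition 7: the BIDIFAC+ objective gives the mode of a Bayesian posterior.) -/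

import Mathlib

/-!
Each Gaussian factor is `(2πτ²)^{-1/2} exp(−x²/(2τ²))`, so the joint density is a product of
normalising constants times the exponential of the sum of the exponents. With `τₖ² = 1/λₖ` that sum
is `−½ L(U,V)`, because on a feasible factorization the prior sums over the supports `ρ k`, `γ k`
are the full squared Frobenius norms. Since `t ↦ C exp(−t/2)` is strictly decreasing for `C > 0`,
comparing densities is comparing objectives in reverse.
-/

open Matrix BigOperators

/-- Squared Frobenius norm: sum of squared entries. -/
noncomputable def frobSq {M N : ℕ} (A : Matrix (Fin M) (Fin N) ℝ) : ℝ :=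
  ∑ m, ∑ n, (A m n) ^ 2

/-- The centered Gaussian density with variance `t2`:
`φ(x; t2) = (2π t2)^{-1/2} exp(−x²/(2 t2))`. -/
noncomputable def gaussPdf (x t2 : ℝ) : ℝ :=
  (Real.sqrt (2 * Real.pi * t2))⁻¹ * Real.exp (-(x ^ 2) / (2 * t2))

/-- A factorization `(U, V)` with ranks `R k` is feasible if the `m`-th row of `U⁽ᵏ⁾`
vanishes for `m ∉ ρ k` and the `n`-th row of `V⁽ᵏ⁾` vanishes for `n ∉ γ k`. -/
def FactorFeasible {M N K : ℕ} (ρ : Fin K → Finset (Fin M)) (γ : Fin K → Finset (Fin N))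
    (R : Fin K → ℕ)
    (U : ∀ k, Matrix (Fin M) (Fin (R k)) ℝ)
    (V : ∀ k, Matrix (Fin N) (Fin (R k)) ℝ) : Prop :=
  (∀ k m, m ∉ ρ k → ∀ r, U k m r = 0) ∧ (∀ k n, n ∉ γ k → ∀ r, V k n r = 0)

/-- The penalized factorization objective
`L(U,V) = ‖X − ∑ₖ U⁽ᵏ⁾V⁽ᵏ⁾ᵀ‖_F² + ∑ₖ λₖ(‖U⁽ᵏ⁾‖_F² + ‖V⁽ᵏ⁾‖_F²)`. -/
noncomputable def factorObj {M N K : ℕ} (X : Matrix (Fin M) (Fin N) ℝ)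
    (lam : Fin K → ℝ) (R : Fin K → ℕ)
    (U : ∀ k, Matrix (Fin M) (Fin (R k)) ℝ)
    (V : ∀ k, Matrix (Fin N) (Fin (R k)) ℝ) : ℝ :=
  frobSq (X - ∑ k, U k * (V k)ᵀ) + ∑ k, lam k * (frobSq (U k) + frobSq (V k))

/-- The joint density of the Bayesian model: unit-variance Gaussian errors on every entry of
`X − ∑ₖ U⁽ᵏ⁾V⁽ᵏ⁾ᵀ`, and Gaussian priors with variance `τₖ² = 1/λₖ` on the free entries of the
factors (those in the supports `ρ k` resp. `γ k`). -/
noncomputable def jointDensity {M N K : ℕ}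
    (ρ : Fin K → Finset (Fin M)) (γ : Fin K → Finset (Fin N))
    (lam : Fin K → ℝ) (R : Fin K → ℕ)
    (X : Matrix (Fin M) (Fin N) ℝ)
    (U : ∀ k, Matrix (Fin M) (Fin (R k)) ℝ)
    (V : ∀ k, Matrix (Fin N) (Fin (R k)) ℝ) : ℝ :=
  (∏ m, ∏ n, gaussPdf ((X - ∑ k, U k * (V k)ᵀ) m n) 1)
    * (∏ k, ∏ m ∈ ρ k, ∏ r, gaussPdf (U k m r) (1 / lam k))
    * (∏ k, ∏ n ∈ γ k, ∏ r, gaussPdf (V k n r) (1 / lam k))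

lemma prod_prod_gaussPdf {ι κ : Type*} [Fintype κ] (s : Finset ι) (A : ι → κ → ℝ) (t2 : ℝ) :
    ∏ i ∈ s, ∏ j, gaussPdf (A i j) t2
      = (Real.sqrt (2 * Real.pi * t2))⁻¹ ^ (s.card * Fintype.card κ)
        * Real.exp (-(∑ i ∈ s, ∑ j, A i j ^ 2) / (2 * t2)) := by
  simp only [gaussPdf, Finset.prod_mul_distrib, Finset.prod_const, Finset.card_univ, ← pow_mul,
    ← Real.exp_sum]
  congr 2
  · ring
  · simp only [neg_div, Finset.sum_neg_distrib, Finset.sum_div]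

lemma sum_sum_sq_eq_frobSq {M N : ℕ} {s : Finset (Fin M)} {A : Matrix (Fin M) (Fin N) ℝ}
    (hA : ∀ m ∉ s, ∀ n, A m n = 0) :
    ∑ m ∈ s, ∑ n, A m n ^ 2 = frobSq A :=
  Finset.sum_subset (Finset.subset_univ s) fun m _ hm ↦ by simp [hA m hm]

lemma prod_gaussPdf_of_rows_eq_zero {M N : ℕ} {s : Finset (Fin M)} {A : Matrix (Fin M) (Fin N) ℝ}
    (hA : ∀ m ∉ s, ∀ n, A m n = 0) (lam : ℝ) :
    ∏ m ∈ s, ∏ n, gaussPdf (A m n) (1 / lam)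
      = (Real.sqrt (2 * Real.pi * (1 / lam)))⁻¹ ^ (s.card * N)
        * Real.exp (-(1 / 2) * (lam * frobSq A)) := by
  rw [prod_prod_gaussPdf s A, Fintype.card_fin, sum_sum_sq_eq_frobSq hA, one_div lam,
    div_eq_mul_inv (-frobSq A), mul_inv, inv_inv]
  ring_nf

noncomputable def jointDensityConst {M N K : ℕ}
    (ρ : Fin K → Finset (Fin M)) (γ : Fin K → Finset (Fin N))
    (lam : Fin K → ℝ) (R : Fin K → ℕ) : ℝ :=
  (Real.sqrt (2 * Real.pi))⁻¹ ^ (M * N)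
    * (∏ k, (Real.sqrt (2 * Real.pi * (1 / lam k)))⁻¹ ^ ((ρ k).card * R k))
    * ∏ k, (Real.sqrt (2 * Real.pi * (1 / lam k)))⁻¹ ^ ((γ k).card * R k)

lemma jointDensityConst_pos {M N K : ℕ}
    (ρ : Fin K → Finset (Fin M)) (γ : Fin K → Finset (Fin N))
    {lam : Fin K → ℝ} (hlam : ∀ k, 0 < lam k) (R : Fin K → ℕ) :
    0 < jointDensityConst ρ γ lam R := by
  have hk : ∀ k, 0 < (Real.sqrt (2 * Real.pi * (1 / lam k)))⁻¹ := fun k ↦ by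
    have := hlam k
    positivity
  have hρ := Finset.prod_pos fun k (_ : k ∈ Finset.univ) ↦ pow_pos (hk k) ((ρ k).card * R k)
  have hγ := Finset.prod_pos fun k (_ : k ∈ Finset.univ) ↦ pow_pos (hk k) ((γ k).card * R k)
  unfold jointDensityConst
  positivity

lemma jointDensity_eq {M N K : ℕ}
    {ρ : Fin K → Finset (Fin M)} {γ : Fin K → Finset (Fin N)}
    (lam : Fin K → ℝ) {R : Fin K → ℕ} (X : Matrix (Fin M) (Fin N) ℝ)
    {U : ∀ k, Matrix (Fin M) (Fin (R k)) ℝ} {V : ∀ k, Matrix (Fin N) (Fin (R k)) ℝ}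
    (h : FactorFeasible ρ γ R U V) :
    jointDensity ρ γ lam R X U V
      = jointDensityConst ρ γ lam R * Real.exp (-(1 / 2) * factorObj X lam R U V) := by
  obtain ⟨hU, hV⟩ := h
  have hE := prod_gaussPdf_of_rows_eq_zero
    (s := Finset.univ) (A := X - ∑ k, U k * (V k)ᵀ) (by simp) 1
  rw [Finset.card_univ, Fintype.card_fin, one_div_one, mul_one] at hE
  have hexp : -(1 / 2) * factorObj X lam R U V
      = -(1 / 2) * (1 * frobSq (X - ∑ k, U k * (V k)ᵀ))
        + ∑ k, -(1 / 2) * (lam k * frobSq (U k)) + ∑ k, -(1 / 2) * (lam k * frobSq (V k)) := by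
    simp only [factorObj, mul_add, Finset.mul_sum, Finset.sum_add_distrib]
    ring
  rw [jointDensity, hE,
    Finset.prod_congr rfl fun k _ ↦ prod_gaussPdf_of_rows_eq_zero (hU k) (lam k),
    Finset.prod_congr rfl fun k _ ↦ prod_gaussPdf_of_rows_eq_zero (hV k) (lam k),
    Finset.prod_mul_distrib, Finset.prod_mul_distrib, ← Real.exp_sum, ← Real.exp_sum,
    hexp, Real.exp_add, Real.exp_add, jointDensityConst]
  ring

theorem bidifac_bayesian_mode_general
    {M N K : ℕ}
    (ρ : Fin K → Finset (Fin M)) (γ : Fin K → Finset (Fin N))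
    (lam : Fin K → ℝ) (hlam : ∀ k, 0 < lam k) (R : Fin K → ℕ) :
    ∃ C : ℝ, 0 < C ∧
      (∀ (X : Matrix (Fin M) (Fin N) ℝ)
        (U : ∀ k, Matrix (Fin M) (Fin (R k)) ℝ)
        (V : ∀ k, Matrix (Fin N) (Fin (R k)) ℝ),
        FactorFeasible ρ γ R U V →
          jointDensity ρ γ lam R X U V
            = C * Real.exp (-(1 / 2) * factorObj X lam R U V)) ∧
      (∀ (X : Matrix (Fin M) (Fin N) ℝ)
        (U₁ : ∀ k, Matrix (Fin M) (Fin (R k)) ℝ)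
        (V₁ : ∀ k, Matrix (Fin N) (Fin (R k)) ℝ)
        (U₂ : ∀ k, Matrix (Fin M) (Fin (R k)) ℝ)
        (V₂ : ∀ k, Matrix (Fin N) (Fin (R k)) ℝ),
        FactorFeasible ρ γ R U₁ V₁ → FactorFeasible ρ γ R U₂ V₂ →
          (jointDensity ρ γ lam R X U₁ V₁ ≤ jointDensity ρ γ lam R X U₂ V₂
            ↔ factorObj X lam R U₂ V₂ ≤ factorObj X lam R U₁ V₁)) := by
  have hC := jointDensityConst_pos ρ γ hlam R
  refine ⟨_, hC, fun X U V h ↦ jointDensity_eq lam X h, ?_⟩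
  intro X U₁ V₁ U₂ V₂ h₁ h₂
  rw [jointDensity_eq lam X h₁, jointDensity_eq lam X h₂, mul_le_mul_iff_right₀ hC,
    Real.exp_le_exp]
  constructor <;> intro h <;> linarith

/-- Proposition 7: the joint density of the Bayesian model equals
`C · exp(−½ L(U,V))` for a positive constant `C` not depending on `X`, `U`, `V`;
consequently, maximizing the posterior is equivalent to minimizing the penalized
factorization objective `L`. -/
theorem bidifac_bayesian_mode
    {M N K : ℕ} (hM : 0 < M) (hN : 0 < N) (hK : 0 < K)
    (ρ : Fin K → Finset (Fin M)) (γ : Fin K → Finset (Fin N))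
    (lam : Fin K → ℝ) (hlam : ∀ k, 0 < lam k) (R : Fin K → ℕ) :
    ∃ C : ℝ, 0 < C ∧
      (∀ (X : Matrix (Fin M) (Fin N) ℝ)
        (U : ∀ k, Matrix (Fin M) (Fin (R k)) ℝ)
        (V : ∀ k, Matrix (Fin N) (Fin (R k)) ℝ),
        FactorFeasible ρ γ R U V →
          jointDensity ρ γ lam R X U V
            = C * Real.exp (-(1 / 2) * factorObj X lam R U V)) ∧
      (∀ (X : Matrix (Fin M) (Fin N) ℝ)
        (U₁ : ∀ k, Matrix (Fin M) (Fin (R k)) ℝ)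
        (V₁ : ∀ k, Matrix (Fin N) (Fin (R k)) ℝ)
        (U₂ : ∀ k, Matrix (Fin M) (Fin (R k)) ℝ)
        (V₂ : ∀ k, Matrix (Fin N) (Fin (R k)) ℝ),
        FactorFeasible ρ γ R U₁ V₁ → FactorFeasible ρ γ R U₂ V₂ →
          (jointDensity ρ γ lam R X U₁ V₁ ≤ jointDensity ρ γ lam R X U₂ V₂
            ↔ factorObj X lam R U₂ V₂ ≤ factorObj X lam R U₁ V₁)) :=
  bidifac_bayesian_mode_general ρ γ lam hlam R
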